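/- arXiv:1104.5358 — 9 statements merged into one kernel-verified Lean document; each statement's English description precedes it below -/
import Mathlib

section
/- If S is an isometry on a Hilbert space H, M is a closed subspace of H invariant under S* and containing Ker S*, and P_M denotes the orthogonal projection onto M, then S*P_M S is an orthogonal projection, namely the orthogonal projection onto S*M. -/
/-!
Since `S* S = 1`, the vector `S S* m - m` lies in `Ker S*` for every `m`, so `S S*` maps `M` into
`M` as soon as `Ker S* ⊆ M`. Hence `P` fixes `S S* P S x`, which gives
`(S* P S)² = S* S S* P S = S* P S`, and likewise `S* m = S* P S (S* m)` for `m ∈ M`, so the range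
of `S* P S` is all of `S* M`. Self-adjointness is inherited from `P`.
-/

open ContinuousLinearMap

namespace LinearMap

variable {R E F : Type*} [Ring R] [AddCommGroup E] [Module R E] [AddCommGroup F] [Module R F]
  {A : E →ₗ[R] F} {B : F →ₗ[R] E} {P : E →ₗ[R] E} {M : Submodule R E}

theorem apply_apply_mem_of_ker_le (hAB : Function.LeftInverse A B) (hker : ker A ≤ M)
    {m : E} (hm : m ∈ M) : B (A m) ∈ M := by
  have hdiff : B (A m) - m ∈ ker A := by simp [hAB (A m)]
  simpa using M.add_mem (hker hdiff) hm

theorem IsProj.isIdempotentElem_comp_comp (hP : IsProj M P) (hAB : Function.LeftInverse A B)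
    (hker : ker A ≤ M) : IsIdempotentElem (A ∘ₗ P ∘ₗ B) := by
  ext y
  simp only [Module.End.mul_apply, comp_apply,
    hP.map_id _ (apply_apply_mem_of_ker_le hAB hker (hP.map_mem (B y))), hAB _]

theorem IsProj.range_comp_comp (hP : IsProj M P) (hAB : Function.LeftInverse A B)
    (hker : ker A ≤ M) : range (A ∘ₗ P ∘ₗ B) = M.map A := by
  refine le_antisymm ?_ fun _ ⟨m, hm, hy⟩ => ⟨A m, ?_⟩
  · rintro _ ⟨y, rfl⟩
    exact ⟨P (B y), hP.map_mem _, rfl⟩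
  · rw [← hy, comp_apply, comp_apply, hP.map_id _ (apply_apply_mem_of_ker_le hAB hker hm), hAB]

end LinearMap

theorem stmt0_general {H : Type*} [NormedAddCommGroup H] [InnerProductSpace ℂ H] [CompleteSpace H]
    (S : H →L[ℂ] H) (hS : ∀ x, ‖S x‖ = ‖x‖)
    (M : Submodule ℂ H)
    (hker : LinearMap.ker (adjoint S : H →ₗ[ℂ] H) ≤ M)
    (P : H →L[ℂ] H) (hP1 : IsIdempotentElem P) (hP2 : IsSelfAdjoint P)
    (hP3 : LinearMap.range (P : H →ₗ[ℂ] H) = M) :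
    IsIdempotentElem ((adjoint S) ∘L P ∘L S) ∧
    IsSelfAdjoint ((adjoint S) ∘L P ∘L S) ∧
    LinearMap.range ((adjoint S) ∘L P ∘L S : H →ₗ[ℂ] H) = Submodule.map (adjoint S : H →ₗ[ℂ] H) M := by
  have hSS : Function.LeftInverse (adjoint S) S :=
    DFunLike.congr_fun (S.norm_map_iff_adjoint_comp_self.mp hS)
  have hPM : LinearMap.IsProj M (P : H →ₗ[ℂ] H) :=
    hP3 ▸ LinearMap.IsIdempotentElem.isProj_range _ hP1.toLinearMap
  refine ⟨?_, hP2.adjoint_conj S, hPM.range_comp_comp hSS hker⟩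
  exact isIdempotentElem_toLinearMap_iff.mp (hPM.isIdempotentElem_comp_comp hSS hker)

theorem stmt0 {H : Type*} [NormedAddCommGroup H] [InnerProductSpace ℂ H] [CompleteSpace H]
    (S : H →L[ℂ] H) (hS : ∀ x, ‖S x‖ = ‖x‖)
    (M : Submodule ℂ H) (hMc : IsClosed (M : Set H))
    (hMinv : ∀ x ∈ M, adjoint S x ∈ M)
    (hker : LinearMap.ker (adjoint S : H →ₗ[ℂ] H) ≤ M)
    (P : H →L[ℂ] H) (hP1 : IsIdempotentElem P) (hP2 : IsSelfAdjoint P)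
    (hP3 : LinearMap.range (P : H →ₗ[ℂ] H) = M) :
    IsIdempotentElem ((adjoint S) ∘L P ∘L S) ∧
    IsSelfAdjoint ((adjoint S) ∘L P ∘L S) ∧
    LinearMap.range ((adjoint S) ∘L P ∘L S : H →ₗ[ℂ] H) = Submodule.map (adjoint S : H →ₗ[ℂ] H) M :=
  stmt0_general S hS M hker P hP1 hP2 hP3
end

section
/- If S is an isometry on a Hilbert space H, M is a closed S*-invariant subspace containing Ker S*, P_M is the orthogonal projection onto M and R_M is the orthogonal projection onto S*M, then R_M S* = S* P_M. -/
/-!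
Since `S` is an isometry, `S* S = 1`, so `m - S S* m ∈ ker S* ⊆ M` and hence `S S* M ⊆ M`.
Consequently `S*` maps `M⊥` into `(S* M)⊥`, because `⟪S* m, S* y⟫ = ⟪S S* m, y⟫`. Splitting
`x = P_M x + (x - P_M x)`, the vector `S* x` is the sum of `S* P_M x ∈ S* M` and a vector orthogonal
to `S* M`, so its orthogonal projection onto `S* M` is `S* P_M x`.
-/

open ContinuousLinearMap

section

variable {𝕜 E F : Type*} [RCLike 𝕜] [NormedAddCommGroup E] [InnerProductSpace 𝕜 E]
  [CompleteSpace E] [NormedAddCommGroup F] [InnerProductSpace 𝕜 F] [CompleteSpace F]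

theorem IsStarProjection.exists_eq_starProjection_of_range_eq {P : E →L[𝕜] E}
    (hP : IsStarProjection P) {K : Submodule 𝕜 E} (hK : LinearMap.range (P : E →ₗ[𝕜] E) = K) :
    ∃ _ : K.HasOrthogonalProjection, P = K.starProjection := by
  subst hK
  exact isStarProjection_iff_eq_starProjection_range.mp hP

theorem ContinuousLinearMap.apply_adjoint_apply_mem {S : E →L[𝕜] F} (hS : adjoint S ∘L S = 1)
    {M : Submodule 𝕜 F} (hker : LinearMap.ker (adjoint S : F →ₗ[𝕜] E) ≤ M) {m : F}
    (hm : m ∈ M) : S (adjoint S m) ∈ M := by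
  have hSS : adjoint S (S (adjoint S m)) = adjoint S m := by
    rw [← comp_apply, hS, one_apply_eq_self]
  have hdefect : m - S (adjoint S m) ∈ M := hker <| by simp [hSS]
  simpa using M.sub_mem hm hdefect

theorem ContinuousLinearMap.map_adjoint_orthogonal_le {S : E →L[𝕜] F} (hS : adjoint S ∘L S = 1)
    {M : Submodule 𝕜 F} (hker : LinearMap.ker (adjoint S : F →ₗ[𝕜] E) ≤ M) :
    Mᗮ.map (adjoint S : F →ₗ[𝕜] E) ≤ (M.map (adjoint S : F →ₗ[𝕜] E))ᗮ := by
  rintro _ ⟨y, hy, rfl⟩ _ ⟨m, hm, rfl⟩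
  change inner 𝕜 (adjoint S m) (adjoint S y) = 0
  rw [adjoint_inner_right]
  exact hy _ (apply_adjoint_apply_mem hS hker hm)

end

theorem stmt1_general {H : Type*} [NormedAddCommGroup H] [InnerProductSpace ℂ H] [CompleteSpace H]
    (S : H →L[ℂ] H) (hS : ∀ x, ‖S x‖ = ‖x‖)
    (M : Submodule ℂ H)
    (hker : LinearMap.ker (adjoint S : H →ₗ[ℂ] H) ≤ M)
    (P : H →L[ℂ] H) (hP1 : IsIdempotentElem P) (hP2 : IsSelfAdjoint P)
    (hP3 : LinearMap.range (P : H →ₗ[ℂ] H) = M)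
    (R : H →L[ℂ] H) (hR1 : IsIdempotentElem R) (hR2 : IsSelfAdjoint R)
    (hR3 : LinearMap.range (R : H →ₗ[ℂ] H) = Submodule.map (adjoint S : H →ₗ[ℂ] H) M) :
    R ∘L (adjoint S) = (adjoint S) ∘L P := by
  obtain ⟨_, rfl⟩ := IsStarProjection.exists_eq_starProjection_of_range_eq ⟨hP1, hP2⟩ hP3
  obtain ⟨_, rfl⟩ := IsStarProjection.exists_eq_starProjection_of_range_eq ⟨hR1, hR2⟩ hR3
  have hSS : adjoint S ∘L S = 1 := (norm_map_iff_adjoint_comp_self S).mp hS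
  ext x
  have hmem : adjoint S (M.starProjection x) ∈ M.map (adjoint S : H →ₗ[ℂ] H) :=
    Submodule.mem_map_of_mem (M.starProjection_apply_mem x)
  have horth : adjoint S (x - M.starProjection x) ∈ (M.map (adjoint S : H →ₗ[ℂ] H))ᗮ :=
    map_adjoint_orthogonal_le hSS hker
      (Submodule.mem_map_of_mem (M.sub_starProjection_mem_orthogonal x))
  exact Submodule.eq_starProjection_of_mem_orthogonal' hmem horth
    (by rw [comp_apply, ← map_add, add_sub_cancel]; rfl)

theorem stmt1 {H : Type*} [NormedAddCommGroup H] [InnerProductSpace ℂ H] [CompleteSpace H]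
    (S : H →L[ℂ] H) (hS : ∀ x, ‖S x‖ = ‖x‖)
    (M : Submodule ℂ H) (hMc : IsClosed (M : Set H))
    (hMinv : ∀ x ∈ M, adjoint S x ∈ M)
    (hker : LinearMap.ker (adjoint S : H →ₗ[ℂ] H) ≤ M)
    (P : H →L[ℂ] H) (hP1 : IsIdempotentElem P) (hP2 : IsSelfAdjoint P)
    (hP3 : LinearMap.range (P : H →ₗ[ℂ] H) = M)
    (R : H →L[ℂ] H) (hR1 : IsIdempotentElem R) (hR2 : IsSelfAdjoint R)
    (hR3 : LinearMap.range (R : H →ₗ[ℂ] H) = Submodule.map (adjoint S : H →ₗ[ℂ] H) M) :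
    R ∘L (adjoint S) = (adjoint S) ∘L P :=
  stmt1_general S hS M hker P hP1 hP2 hP3 R hR1 hR2 hR3
end

section
/- If S is an isometry on a Hilbert space H, M is a closed S*-invariant subspace containing Ker S*, and R_M is the orthogonal projection onto S*M, then SR_M = P_M S, where P_M is the orthogonal projection onto M. -/
open ContinuousLinearMap

/-!
`P_M y` is the unique point of `M` whose difference with `y` is orthogonal to `M`, so it suffices
to check this for `S R_M x`. It lies in `M`: writing `R_M x = S* m` with `m ∈ M`, we have
`S S* m = m - (m - S S* m)`, and `m - S S* m ∈ Ker S* ⊆ M` because `S* S = 1`. And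
`S x - S R_M x ⊥ M`, since `⟪S (x - R_M x), m⟫ = ⟪x - R_M x, S* m⟫ = 0` for `m ∈ M`.
-/

namespace IsStarProjection

variable {𝕜 E : Type*} [RCLike 𝕜] [NormedAddCommGroup E] [InnerProductSpace 𝕜 E]
  [CompleteSpace E] {P : E →L[𝕜] E}

theorem sub_apply_mem_orthogonal_range (hP : IsStarProjection P) (u : E) :
    u - P u ∈ P.rangeᗮ := by
  obtain ⟨_, hPK⟩ := isStarProjection_iff_eq_starProjection_range.mp hP
  simpa only [← hPK] using P.range.sub_starProjection_mem_orthogonal u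

theorem apply_eq_of_mem_of_sub_mem_orthogonal (hP : IsStarProjection P) {u v : E}
    (hv : v ∈ P.range) (huv : u - v ∈ P.rangeᗮ) : P u = v := by
  obtain ⟨_, hPK⟩ := isStarProjection_iff_eq_starProjection_range.mp hP
  calc P u = P.range.starProjection u := DFunLike.congr_fun hPK u
    _ = v := Submodule.eq_starProjection_of_mem_orthogonal hv huv

end IsStarProjection

namespace ContinuousLinearMap

variable {𝕜 E F : Type*} [RCLike 𝕜] [NormedAddCommGroup E] [InnerProductSpace 𝕜 E]
  [CompleteSpace E] [NormedAddCommGroup F] [InnerProductSpace 𝕜 F] [CompleteSpace F]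
  {S : E →L[𝕜] F}

theorem apply_adjoint_mem_of_ker_adjoint_le (hS : ∀ x, ‖S x‖ = ‖x‖) {M : Submodule 𝕜 F}
    (hker : (adjoint S).ker ≤ M) {m : F} (hm : m ∈ M) : S (adjoint S m) ∈ M := by
  have hSS (y : E) : adjoint S (S y) = y := congr($(S.norm_map_iff_adjoint_comp_self.mp hS) y)
  have hdefect : m - S (adjoint S m) ∈ M := hker (by simp [hSS])
  simpa using M.sub_mem hm hdefect

theorem apply_mem_orthogonal_of_mem_orthogonal {M : Submodule 𝕜 F} {K : Submodule 𝕜 E}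
    (hMK : M.map (adjoint S : F →ₗ[𝕜] E) ≤ K) {x : E} (hx : x ∈ Kᗮ) : S x ∈ Mᗮ := by
  intro m hm
  rw [← adjoint_inner_left]
  exact hx _ (hMK ⟨m, hm, rfl⟩)

end ContinuousLinearMap

theorem stmt2_general {H : Type*} [NormedAddCommGroup H] [InnerProductSpace ℂ H] [CompleteSpace H]
    (S : H →L[ℂ] H) (hS : ∀ x, ‖S x‖ = ‖x‖)
    (M : Submodule ℂ H)
    (hker : LinearMap.ker (adjoint S : H →ₗ[ℂ] H) ≤ M)
    (P : H →L[ℂ] H) (hP1 : IsIdempotentElem P) (hP2 : IsSelfAdjoint P)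
    (hP3 : LinearMap.range (P : H →ₗ[ℂ] H) = M)
    (R : H →L[ℂ] H) (hR1 : IsIdempotentElem R) (hR2 : IsSelfAdjoint R)
    (hR3 : LinearMap.range (R : H →ₗ[ℂ] H) = Submodule.map (adjoint S : H →ₗ[ℂ] H) M) :
    S ∘L R = P ∘L S := by
  have hP : IsStarProjection P := ⟨hP1, hP2⟩
  have hR : IsStarProjection R := ⟨hR1, hR2⟩
  ext x
  show S (R x) = P (S x)
  refine (hP.apply_eq_of_mem_of_sub_mem_orthogonal ?_ ?_).symm
  · obtain ⟨m, hm, hmx⟩ : R x ∈ M.map (adjoint S : H →ₗ[ℂ] H) := hR3 ▸ ⟨x, rfl⟩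
    rw [← hmx]
    exact hP3 ▸ apply_adjoint_mem_of_ker_adjoint_le hS hker hm
  · rw [← map_sub, hP3]
    exact apply_mem_orthogonal_of_mem_orthogonal hR3.ge (hR.sub_apply_mem_orthogonal_range x)

theorem stmt2 {H : Type*} [NormedAddCommGroup H] [InnerProductSpace ℂ H] [CompleteSpace H]
    (S : H →L[ℂ] H) (hS : ∀ x, ‖S x‖ = ‖x‖)
    (M : Submodule ℂ H) (hMc : IsClosed (M : Set H))
    (hMinv : ∀ x ∈ M, adjoint S x ∈ M)
    (hker : LinearMap.ker (adjoint S : H →ₗ[ℂ] H) ≤ M)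
    (P : H →L[ℂ] H) (hP1 : IsIdempotentElem P) (hP2 : IsSelfAdjoint P)
    (hP3 : LinearMap.range (P : H →ₗ[ℂ] H) = M)
    (R : H →L[ℂ] H) (hR1 : IsIdempotentElem R) (hR2 : IsSelfAdjoint R)
    (hR3 : LinearMap.range (R : H →ₗ[ℂ] H) = Submodule.map (adjoint S : H →ₗ[ℂ] H) M) :
    S ∘L R = P ∘L S :=
  stmt2_general S hS M hker P hP1 hP2 hP3 R hR1 hR2 hR3
end

section
/- Let T : H → K be a bounded operator with finite rank, S an isometry on H, and γ = ‖T‖. If no maximizing vector of T belongs to the range of S, then the operator γ²I − S*T*TS is invertible (positive definite). -/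
/-!
Put `B = T ∘ S`. As `S` is an isometry whose range contains no maximizing vector of `T`,
`‖B x‖ < γ ‖x‖` for every `x ≠ 0`. A finite-rank operator attains its norm on the closed unit ball
(it factors through the orthogonal projection onto the finite-dimensional space `range (B*B)`,
whose orthogonal complement is `ker B`), so `‖B‖ < γ`. Now `γ²I − S*T*TS = γ²I − B*B`, and
`re ⟪(γ²I − B*B) x, x⟫ = γ²‖x‖² − ‖B x‖² ≥ (γ² − ‖B‖²)‖x‖²`, while `‖B*B‖ = ‖B‖² < γ²` puts
`γ²` in the resolvent set of `B*B`.
-/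

open ContinuousLinearMap

namespace ContinuousLinearMap

section ProperDomain

variable {𝕜 𝕜₂ E F : Type*} [DenselyNormedField 𝕜] [NontriviallyNormedField 𝕜₂]
  [NormedAddCommGroup E] [SeminormedAddCommGroup F] [NormedSpace 𝕜 E] [NormedSpace 𝕜₂ F]
  {σ₁₂ : 𝕜 →+* 𝕜₂} [RingHomIsometric σ₁₂] [ProperSpace E]

theorem exists_norm_le_one_norm_apply_eq_opNorm (f : E →SL[σ₁₂] F) :
    ∃ x, ‖x‖ ≤ 1 ∧ ‖f x‖ = ‖f‖ := by
  have hc : IsCompact ((fun x => ‖f x‖) '' Metric.closedBall 0 1) :=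
    (isCompact_closedBall 0 1).image (by fun_prop)
  obtain ⟨x, hx, hfx⟩ := hc.sSup_mem ((Metric.nonempty_closedBall.2 zero_le_one).image _)
  exact ⟨x, mem_closedBall_zero_iff.1 hx, hfx.trans f.sSup_unitClosedBall_eq_norm⟩

end ProperDomain

variable {𝕜 E F : Type*} [RCLike 𝕜] [NormedAddCommGroup E] [InnerProductSpace 𝕜 E]
  [CompleteSpace E] [NormedAddCommGroup F] [InnerProductSpace 𝕜 F] [CompleteSpace F]

theorem orthogonal_range_adjoint_comp_self (B : E →L[𝕜] F) :
    (adjoint B ∘L B).rangeᗮ = B.ker := by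
  rw [orthogonal_range, adjoint_comp, adjoint_adjoint, ker_adjoint_comp_self]

theorem exists_norm_le_one_norm_apply_eq_opNorm_of_finiteDimensional_range (B : E →L[𝕜] F)
    (hB : FiniteDimensional 𝕜 B.range) : ∃ x, ‖x‖ ≤ 1 ∧ ‖B x‖ = ‖B‖ := by
  set V := (adjoint B ∘L B).range
  have : FiniteDimensional 𝕜 V := by
    change FiniteDimensional 𝕜
      (LinearMap.range ((adjoint B : F →ₗ[𝕜] E) ∘ₗ (B : E →ₗ[𝕜] F)))
    rw [LinearMap.range_comp]
    infer_instance
  have hfactor : (B ∘L V.subtypeL) ∘L V.orthogonalProjectionOnto = B := by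
    ext x
    have hx : x - V.starProjection x ∈ B.ker := by
      rw [← orthogonal_range_adjoint_comp_self]
      exact V.sub_starProjection_mem_orthogonal x
    replace hx : B (x - V.starProjection x) = 0 := hx
    rw [map_sub, sub_eq_zero, Submodule.starProjection_apply] at hx
    exact hx.symm
  obtain ⟨v, hv, hBv⟩ := (B ∘L V.subtypeL).exists_norm_le_one_norm_apply_eq_opNorm
  have hv' : ‖(v : E)‖ ≤ 1 := (V.norm_coe v).trans_le hv
  refine ⟨v, hv', le_antisymm (B.unit_le_opNorm _ hv') ?_⟩
  calc ‖B‖ = ‖(B ∘L V.subtypeL) ∘L V.orthogonalProjectionOnto‖ := by rw [hfactor]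
    _ ≤ ‖B ∘L V.subtypeL‖ * ‖V.orthogonalProjectionOnto‖ := opNorm_comp_le _ _
    _ ≤ ‖B ∘L V.subtypeL‖ :=
        mul_le_of_le_one_right (norm_nonneg _) V.orthogonalProjectionOnto_norm_le
    _ = ‖B v‖ := hBv.symm

theorem opNorm_lt_of_finiteDimensional_range (B : E →L[𝕜] F) (hB : FiniteDimensional 𝕜 B.range)
    {c : ℝ} (hc : 0 < c) (h : ∀ x ≠ 0, ‖B x‖ < c * ‖x‖) : ‖B‖ < c := by
  obtain ⟨x, hx, hBx⟩ := B.exists_norm_le_one_norm_apply_eq_opNorm_of_finiteDimensional_range hB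
  rcases eq_or_ne x 0 with rfl | hx0
  · rwa [← hBx, map_zero, norm_zero]
  · calc ‖B‖ = ‖B x‖ := hBx.symm
      _ < c * ‖x‖ := h x hx0
      _ ≤ c := mul_le_of_le_one_right hc.le hx

theorem re_inner_smul_one_sub_adjoint_comp_self_apply (B : E →L[𝕜] F) (c : ℝ) (x : E) :
    RCLike.re (inner 𝕜 ((((c : 𝕜) ^ 2) • (1 : E →L[𝕜] E) - adjoint B ∘L B) x) x)
      = c ^ 2 * ‖x‖ ^ 2 - ‖B x‖ ^ 2 := by
  rw [sub_apply, inner_sub_left, map_sub, comp_apply, adjoint_inner_left, smul_apply,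
    one_apply_eq_self, inner_smul_left, inner_self_eq_norm_sq_to_K,
    inner_self_eq_norm_sq_to_K]
  norm_cast
  rw [RCLike.conj_ofReal, ← RCLike.ofReal_mul, RCLike.ofReal_re]

theorem re_inner_smul_one_sub_adjoint_comp_self_apply_pos {B : E →L[𝕜] F} {c : ℝ} (hB : ‖B‖ < c)
    {x : E} (hx : x ≠ 0) :
    0 < RCLike.re (inner 𝕜 ((((c : 𝕜) ^ 2) • (1 : E →L[𝕜] E) - adjoint B ∘L B) x) x) := by
  rw [re_inner_smul_one_sub_adjoint_comp_self_apply]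
  have hBx : ‖B x‖ ≤ ‖B‖ * ‖x‖ := B.le_opNorm x
  have hx : 0 < ‖x‖ := norm_pos_iff.2 hx
  have hB0 : 0 ≤ ‖B‖ := norm_nonneg B
  nlinarith [norm_nonneg (B x), mul_lt_mul_of_pos_right hB hx]

theorem isUnit_smul_one_sub_adjoint_comp_self {B : E →L[𝕜] F} {c : ℝ} (hB : ‖B‖ < c) :
    IsUnit (((c : 𝕜) ^ 2) • (1 : E →L[𝕜] E) - adjoint B ∘L B) := by
  have hnorm : ‖adjoint B ∘L B‖ * ‖(1 : E →L[𝕜] E)‖ < ‖(c : 𝕜) ^ 2‖ := by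
    rw [norm_adjoint_comp_self, norm_pow, RCLike.norm_ofReal,
      abs_of_pos ((norm_nonneg B).trans_lt hB)]
    calc ‖B‖ * ‖B‖ * ‖(1 : E →L[𝕜] E)‖ ≤ ‖B‖ * ‖B‖ :=
          mul_le_of_le_one_right (by positivity) norm_id_le
      _ < c ^ 2 := by nlinarith [norm_nonneg B]
  have := spectrum.mem_resolventSet_of_norm_lt_mul hnorm
  rwa [spectrum.mem_resolventSet_iff, Algebra.algebraMap_eq_smul_one] at this

end ContinuousLinearMap

theorem stmt5 {H K : Type*} [NormedAddCommGroup H] [InnerProductSpace ℂ H] [CompleteSpace H]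
    [NormedAddCommGroup K] [InnerProductSpace ℂ K] [CompleteSpace K]
    (T : H →L[ℂ] K) (hT0 : T ≠ 0)
    (hfr : FiniteDimensional ℂ (LinearMap.range (T : H →ₗ[ℂ] K)))
    (S : H →L[ℂ] H) (hS : ∀ x, ‖S x‖ = ‖x‖)
    (hmax : ∀ w : H, w ≠ 0 → ‖T w‖ = ‖T‖ * ‖w‖ → w ∉ Set.range S) :
    (∀ x : H, x ≠ 0 →
      0 < (inner ℂ ((((‖T‖ : ℂ) ^ 2) • (1 : H →L[ℂ] H)
        - (adjoint S) ∘L ((adjoint T) ∘L T) ∘L S) x) x : ℂ).re) ∧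
    IsUnit (((‖T‖ : ℂ) ^ 2) • (1 : H →L[ℂ] H)
        - (adjoint S) ∘L ((adjoint T) ∘L T) ∘L S) := by
  set B := T ∘L S
  have hB : adjoint B ∘L B = adjoint S ∘L (adjoint T ∘L T) ∘L S := by
    rw [adjoint_comp]; rfl
  have hBlt : ∀ x ≠ 0, ‖B x‖ < ‖T‖ * ‖x‖ := by
    intro x hx
    have hle : ‖T (S x)‖ ≤ ‖T‖ * ‖x‖ := (T.le_opNorm (S x)).trans_eq (by rw [hS])
    refine hle.lt_of_ne fun h => hmax (S x) ?_ (by rwa [hS]) ⟨x, rfl⟩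
    rwa [← norm_ne_zero_iff, hS, norm_ne_zero_iff]
  have hfrB : FiniteDimensional ℂ B.range :=
    Submodule.finiteDimensional_of_le (LinearMap.range_comp_le_range _ _)
  have hBnorm : ‖B‖ < ‖T‖ :=
    B.opNorm_lt_of_finiteDimensional_range hfrB (norm_pos_iff.2 hT0) hBlt
  rw [← hB]
  exact ⟨fun x hx => re_inner_smul_one_sub_adjoint_comp_self_apply_pos hBnorm hx,
    isUnit_smul_one_sub_adjoint_comp_self hBnorm⟩
end

section
/- Let S be an isometry on a Hilbert space H, D a positive operator with closed range such that D° = (S*D²S)^{1/2} is invertible, and suppose P = DSD°^{-2}S*D is the orthogonal projection onto Range D. If Λ = D°^{-2}S*D² satisfies sup_k ‖Λ^k‖ < ∞ and S is strongly stable in the sense that ‖S*^k h‖ → 0 for all h, then any h ∈ H with S*^k h ∈ Range D for all k ≥ 0 must be zero. Consequently the closed linear span of the subspaces S^k(Ker D), k ≥ 0, is all of H. -/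
open ContinuousLinearMap Filter Topology

/-! Since `P = D S D°⁻² S* D` is the orthogonal projection onto `Range D`, we have
`D P = (P D)* = D`, which says `Λ* S* D = D`: on `Range D`, `Λ*` is a left inverse of `S*`.
So if `S*ᵏ h ∈ Range D` for every `k`, then `h = Λ*ᵏ S*ᵏ h`, whence
`‖h‖ ≤ sup_k ‖Λᵏ‖ · ‖S*ᵏ h‖ → 0`. For the second part, a vector orthogonal to every
`Sᵏ (Ker D)` has `S*ᵏ h ∈ (Ker D)ᗮ`, which is `Range D` because `D` is self-adjoint with
closed range. -/

theorem IsSelfAdjoint.of_mul_eq_one {R : Type*} [Monoid R] [StarMul R] {t l : R}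
    (ht : IsSelfAdjoint t) (h : l * t = 1) : IsSelfAdjoint l := by
  have hr : t * star l = 1 := by rw [← ht.star_eq, ← star_mul, h, star_one]
  calc star l = l * t * star l := by rw [h, one_mul]
    _ = l := by rw [mul_assoc, hr, mul_one]

theorem ContinuousLinearMap.mul_eq_right_of_range_le {R M : Type*} [Semiring R]
    [TopologicalSpace M] [AddCommMonoid M] [Module R M] {P T : M →L[R] M}
    (hP : IsIdempotentElem P) (hT : T.range ≤ P.range) : P * T = T := by
  ext x
  obtain ⟨y, hy⟩ := hT ⟨x, rfl⟩
  simp only [coe_coe] at hy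
  rw [mul_apply_eq_comp, ← hy, ← mul_apply_eq_comp, hP.eq]

theorem ContinuousLinearMap.pow_apply_pow_apply_eq_self {R M : Type*} [Semiring R]
    [TopologicalSpace M] [AddCommMonoid M] [Module R M] {L A T : M →L[R] M} (hLAT : L * A * T = T)
    {h : M} (hmem : ∀ k, (A ^ k) h ∈ T.range) (k : ℕ) : (L ^ k) ((A ^ k) h) = h := by
  induction k with
  | zero => simp
  | succ k ih =>
    obtain ⟨y, hy⟩ := hmem k
    simp only [coe_coe] at hy
    have hstep : L (A (T y)) = T y := by simpa only [mul_apply_eq_comp] using congr($hLAT y)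
    rw [pow_succ L, pow_succ' A, mul_apply_eq_comp, mul_apply_eq_comp, ← hy, hstep, hy, ih]

theorem ContinuousLinearMap.eq_zero_of_forall_pow_apply_mem_range {𝕜 E : Type*}
    [NontriviallyNormedField 𝕜] [NormedAddCommGroup E] [NormedSpace 𝕜 E]
    {L A T : E →L[𝕜] E} (hLAT : L * A * T = T) {C : ℝ} (hL : ∀ k, ‖L ^ k‖ ≤ C) {h : E}
    (hA : Tendsto (fun k => ‖(A ^ k) h‖) atTop (𝓝 0))
    (hmem : ∀ k, (A ^ k) h ∈ T.range) : h = 0 := by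
  have hbound : ∀ k, ‖h‖ ≤ C * ‖(A ^ k) h‖ := fun k =>
    calc ‖h‖ = ‖(L ^ k) ((A ^ k) h)‖ := by rw [pow_apply_pow_apply_eq_self hLAT hmem]
      _ ≤ ‖L ^ k‖ * ‖(A ^ k) h‖ := le_opNorm _ _
      _ ≤ C * ‖(A ^ k) h‖ := by gcongr; exact hL k
  have hlim : Tendsto (fun k => C * ‖(A ^ k) h‖) atTop (𝓝 0) := by
    simpa using hA.const_mul C
  exact norm_le_zero_iff.mp (ge_of_tendsto' hlim hbound)

section

variable {𝕜 E : Type*} [RCLike 𝕜] [NormedAddCommGroup E] [InnerProductSpace 𝕜 E] [CompleteSpace E]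

theorem Submodule.mem_orthogonal_map_iff (T : E →L[𝕜] E) (K : Submodule 𝕜 E) {h : E} :
    h ∈ (K.map (T : E →ₗ[𝕜] E))ᗮ ↔ adjoint T h ∈ Kᗮ := by
  simp only [mem_orthogonal, mem_map, coe_coe, forall_exists_index, and_imp,
    forall_apply_eq_imp_iff₂, adjoint_inner_right]

theorem IsSelfAdjoint.orthogonal_ker_eq_range {T : E →L[𝕜] E} (hT : IsSelfAdjoint T)
    (hTr : IsClosed (Set.range T)) : T.kerᗮ = T.range := by
  rw [orthogonal_ker, isSelfAdjoint_iff'.mp hT]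
  exact IsClosed.submodule_topologicalClosure_eq hTr

theorem topologicalClosure_iSup_map_pow_ker_eq_top {S T : E →L[𝕜] E} (hT : IsSelfAdjoint T)
    (hTr : IsClosed (Set.range T))
    (h0 : ∀ h, (∀ k : ℕ, (adjoint S ^ k) h ∈ T.range) → h = 0) :
    (⨆ k : ℕ, T.ker.map ((S ^ k : E →L[𝕜] E) : E →ₗ[𝕜] E)).topologicalClosure = ⊤ := by
  rw [Submodule.topologicalClosure_eq_top_iff, Submodule.eq_bot_iff]
  intro h hh
  refine h0 h fun k => ?_
  rw [← Submodule.iInf_orthogonal, Submodule.mem_iInf] at hh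
  rw [← hT.orthogonal_ker_eq_range hTr, ← star_eq_adjoint, ← star_pow, star_eq_adjoint]
  exact (Submodule.mem_orthogonal_map_iff _ _).mp (hh k)

end

theorem stmt9_general {H : Type*} [NormedAddCommGroup H] [InnerProductSpace ℂ H] [CompleteSpace H]
    (S : H →L[ℂ] H)
    (hstable : ∀ h : H, Tendsto (fun k : ℕ => ‖((adjoint S) ^ k) h‖) atTop (nhds 0))
    (D : H →L[ℂ] H) (hD : D.IsPositive) (hDr : IsClosed (Set.range D))
    (D' : H →L[ℂ] H) (hD' : D'.IsPositive)
    (D'i : H →L[ℂ] H) (hi1 : D'i ∘L D' = 1)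
    (hproj1 : IsIdempotentElem (D ∘L S ∘L (D'i ∘L D'i) ∘L (adjoint S) ∘L D))
    (hproj2 : IsSelfAdjoint (D ∘L S ∘L (D'i ∘L D'i) ∘L (adjoint S) ∘L D))
    (hproj3 : LinearMap.range ((D ∘L S ∘L (D'i ∘L D'i) ∘L (adjoint S) ∘L D : H →L[ℂ] H) : H →ₗ[ℂ] H)
        = LinearMap.range (D : H →ₗ[ℂ] H))
    (hΛ : ∃ C : ℝ, ∀ k : ℕ,
        ‖((D'i ∘L D'i) ∘L ((adjoint S) ∘L (D ∘L D))) ^ k‖ ≤ C) :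
    (∀ h : H, (∀ k : ℕ, ((adjoint S) ^ k) h ∈ LinearMap.range (D : H →ₗ[ℂ] H)) → h = 0) ∧
    (⨆ k : ℕ, Submodule.map ((S ^ k : H →L[ℂ] H) : H →ₗ[ℂ] H) (LinearMap.ker (D : H →ₗ[ℂ] H))).topologicalClosure = ⊤ := by
  obtain ⟨C, hC⟩ := hΛ
  set Λ := (D'i ∘L D'i) ∘L ((adjoint S) ∘L (D ∘L D))
  have hDsa : IsSelfAdjoint D := hD.isSelfAdjoint
  have hD'isa : IsSelfAdjoint D'i := hD'.isSelfAdjoint.of_mul_eq_one hi1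
  set P := D ∘L S ∘L (D'i ∘L D'i) ∘L (adjoint S) ∘L D
  have hPD : P * D = D := mul_eq_right_of_range_le hproj1 hproj3.ge
  have hDP : D * P = D := by
    simpa only [star_mul, hDsa.star_eq, hproj2.star_eq] using congr(star $hPD)
  have hΛSD : star Λ * adjoint S * D = D := by
    refine Eq.trans ?_ hDP
    simp only [Λ, P, ← mul_def, ← star_eq_adjoint, star_mul, star_star, hDsa.star_eq, hD'isa.star_eq,
      mul_assoc]
  have hΛpow (k : ℕ) : ‖star Λ ^ k‖ ≤ C := by rw [← star_pow, norm_star]; exact hC k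
  have hzero (h : H) (hmem : ∀ k : ℕ, (adjoint S ^ k) h ∈ LinearMap.range (D : H →ₗ[ℂ] H)) :
      h = 0 :=
    eq_zero_of_forall_pow_apply_mem_range hΛSD hΛpow (hstable h) hmem
  exact ⟨hzero, topologicalClosure_iSup_map_pow_ker_eq_top hDsa hDr hzero⟩

theorem stmt9 {H : Type*} [NormedAddCommGroup H] [InnerProductSpace ℂ H] [CompleteSpace H]
    (S : H →L[ℂ] H) (hS : ∀ x, ‖S x‖ = ‖x‖)
    (hstable : ∀ h : H, Tendsto (fun k : ℕ => ‖((adjoint S) ^ k) h‖) atTop (nhds 0))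
    (D : H →L[ℂ] H) (hD : D.IsPositive) (hDr : IsClosed (Set.range D))
    (D' : H →L[ℂ] H) (hD' : D'.IsPositive)
    (hD'sq : D' ∘L D' = (adjoint S) ∘L (D ∘L D) ∘L S)
    (D'i : H →L[ℂ] H) (hi1 : D'i ∘L D' = 1) (hi2 : D' ∘L D'i = 1)
    (hproj1 : IsIdempotentElem (D ∘L S ∘L (D'i ∘L D'i) ∘L (adjoint S) ∘L D))
    (hproj2 : IsSelfAdjoint (D ∘L S ∘L (D'i ∘L D'i) ∘L (adjoint S) ∘L D))
    (hproj3 : LinearMap.range ((D ∘L S ∘L (D'i ∘L D'i) ∘L (adjoint S) ∘L D : H →L[ℂ] H) : H →ₗ[ℂ] H)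
        = LinearMap.range (D : H →ₗ[ℂ] H))
    (hΛ : ∃ C : ℝ, ∀ k : ℕ,
        ‖((D'i ∘L D'i) ∘L ((adjoint S) ∘L (D ∘L D))) ^ k‖ ≤ C) :
    (∀ h : H, (∀ k : ℕ, ((adjoint S) ^ k) h ∈ LinearMap.range (D : H →ₗ[ℂ] H)) → h = 0) ∧
    (⨆ k : ℕ, Submodule.map ((S ^ k : H →L[ℂ] H) : H →ₗ[ℂ] H) (LinearMap.ker (D : H →ₗ[ℂ] H))).topologicalClosure = ⊤ :=
  stmt9_general S hstable D hD hDr D' hD' D'i hi1 hproj1 hproj2 hproj3 hΛ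
end

section
/- Let T be a bounded operator on a finite-dimensional Hilbert space X, and suppose there exists a surjective bounded operator W : H → X from some Hilbert space H and a bounded operator Λ on H with uniformly bounded powers converging strongly to zero, such that Λ W* = W* T. Then T is strongly stable and hence the spectral radius of T is strictly less than 1. -/
/-! Since `W` is onto, `W†` is injective, and on the finite-dimensional space `X` it is a
closed embedding. The intertwining relation gives `W† (T^k x) = Λ^k (W† x) → 0`, hence
`T^k x → 0`. An eigenvector `v` for `μ ∈ σ(T)` then has `‖μ‖^k ‖v‖ = ‖T^k v‖ → 0`, so every
point of the spectrum lies in the open unit disc. -/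

open ContinuousLinearMap Filter Topology

theorem ContinuousLinearMap.injective_adjoint_of_surjective {𝕜 E F : Type*} [RCLike 𝕜]
    [NormedAddCommGroup E] [InnerProductSpace 𝕜 E] [CompleteSpace E]
    [NormedAddCommGroup F] [InnerProductSpace 𝕜 F] [CompleteSpace F]
    {A : E →L[𝕜] F} (hA : Function.Surjective A) : Function.Injective (adjoint A) := by
  rw [← coe_coe, ← LinearMap.ker_eq_bot, ← orthogonal_range, LinearMap.range_eq_top.mpr hA,
    Submodule.top_orthogonal_eq_bot]

theorem ContinuousLinearMap.pow_apply_of_comp_eq {R M N : Type*} [Semiring R]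
    [TopologicalSpace M] [AddCommMonoid M] [Module R M]
    [TopologicalSpace N] [AddCommMonoid N] [Module R N]
    {S : M →L[R] N} {A : M →L[R] M} {B : N →L[R] N} (h : B ∘L S = S ∘L A) (k : ℕ) (x : M) :
    (B ^ k) (S x) = S ((A ^ k) x) := by
  have hsemiconj : Function.Semiconj S A B := fun y => (congrArg (· y) h).symm
  simpa only [FunLike.coe_pow_eq_iterate] using (hsemiconj.iterate_right k x).symm

theorem ContinuousLinearMap.tendsto_pow_apply_zero_of_comp_eq {𝕜 E F : Type*}
    [NontriviallyNormedField 𝕜] [CompleteSpace 𝕜]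
    [NormedAddCommGroup E] [NormedSpace 𝕜 E] [FiniteDimensional 𝕜 E]
    [NormedAddCommGroup F] [NormedSpace 𝕜 F]
    {S : E →L[𝕜] F} (hS : Function.Injective S) {A : E →L[𝕜] E} {B : F →L[𝕜] F}
    (h : B ∘L S = S ∘L A) (hB : ∀ y, Tendsto (fun k : ℕ => (B ^ k) y) atTop (𝓝 0)) (x : E) :
    Tendsto (fun k : ℕ => (A ^ k) x) atTop (𝓝 0) := by
  have hemb : IsClosedEmbedding S :=
    LinearMap.isClosedEmbedding_of_injective (LinearMap.ker_eq_bot.mpr hS)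
  rw [hemb.tendsto_nhds_iff, Function.comp_def, map_zero]
  simpa only [← pow_apply_of_comp_eq h] using hB (S x)

theorem ContinuousLinearMap.norm_lt_one_of_mem_spectrum_of_tendsto_pow_apply_zero {E : Type*}
    [NormedAddCommGroup E] [NormedSpace ℂ E] [FiniteDimensional ℂ E] {T : E →L[ℂ] E}
    (hT : ∀ x, Tendsto (fun k : ℕ => (T ^ k) x) atTop (𝓝 0)) {μ : ℂ}
    (hμ : μ ∈ spectrum ℂ T) : ‖μ‖ < 1 := by
  rw [spectrum_eq, ← Module.End.hasEigenvalue_iff_mem_spectrum] at hμ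
  obtain ⟨v, hv⟩ := hμ.exists_hasEigenvector
  have hpow : ∀ k : ℕ, (T ^ k) v = μ ^ k • v := fun k => by
    simpa only [← toLinearMap_pow, coe_coe] using hv.pow_apply k
  have hnorm : Tendsto (fun k : ℕ => ‖μ‖ ^ k * ‖v‖) atTop (𝓝 0) := by
    simpa only [hpow, norm_smul, norm_pow, norm_zero] using (hT v).norm
  have hv0 : ‖v‖ ≠ 0 := norm_ne_zero_iff.mpr hv.2
  have hμpow : Tendsto (fun k : ℕ => ‖μ‖ ^ k) atTop (𝓝 0) := by
    simpa only [mul_inv_cancel_right₀ hv0, zero_mul] using hnorm.mul_const ‖v‖⁻¹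
  simpa only [abs_norm] using tendsto_pow_atTop_nhds_zero_iff.mp hμpow

theorem ContinuousLinearMap.spectralRadius_lt_one_of_tendsto_pow_apply_zero {E : Type*}
    [NormedAddCommGroup E] [NormedSpace ℂ E] [FiniteDimensional ℂ E] {T : E →L[ℂ] E}
    (hT : ∀ x, Tendsto (fun k : ℕ => (T ^ k) x) atTop (𝓝 0)) : spectralRadius ℂ T < 1 := by
  rcases (spectrum ℂ T).eq_empty_or_nonempty with hempty | hne
  · simp [spectralRadius, hempty]
  · exact_mod_cast spectrum.spectralRadius_lt_of_forall_lt_of_nonempty hne (r := 1)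
      fun μ hμ => mod_cast norm_lt_one_of_mem_spectrum_of_tendsto_pow_apply_zero hT hμ

theorem stmt11_general {X H : Type*}
    [NormedAddCommGroup X] [InnerProductSpace ℂ X] [FiniteDimensional ℂ X]
    [NormedAddCommGroup H] [InnerProductSpace ℂ H] [CompleteSpace H]
    (W : H →L[ℂ] X) (hW : Function.Surjective W)
    (Λ : H →L[ℂ] H)
    (hΛs : ∀ h : H, Tendsto (fun k : ℕ => (Λ ^ k) h) atTop (nhds 0))
    (T : X →L[ℂ] X) (hcomm : Λ ∘L (adjoint W) = (adjoint W) ∘L T) :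
    (∀ x : X, Tendsto (fun k : ℕ => (T ^ k) x) atTop (nhds 0)) ∧
    spectralRadius ℂ T < 1 := by
  have hstable : ∀ x : X, Tendsto (fun k : ℕ => (T ^ k) x) atTop (nhds 0) :=
    tendsto_pow_apply_zero_of_comp_eq (injective_adjoint_of_surjective hW) hcomm hΛs
  exact ⟨hstable, spectralRadius_lt_one_of_tendsto_pow_apply_zero hstable⟩

theorem stmt11 {X H : Type*}
    [NormedAddCommGroup X] [InnerProductSpace ℂ X] [FiniteDimensional ℂ X]
    [NormedAddCommGroup H] [InnerProductSpace ℂ H] [CompleteSpace H]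
    (W : H →L[ℂ] X) (hW : Function.Surjective W)
    (Λ : H →L[ℂ] H) (hΛb : ∃ C : ℝ, ∀ k : ℕ, ‖Λ ^ k‖ ≤ C)
    (hΛs : ∀ h : H, Tendsto (fun k : ℕ => (Λ ^ k) h) atTop (nhds 0))
    (T : X →L[ℂ] X) (hcomm : Λ ∘L (adjoint W) = (adjoint W) ∘L T) :
    (∀ x : X, Tendsto (fun k : ℕ => (T ^ k) x) atTop (nhds 0)) ∧
    spectralRadius ℂ T < 1 :=
  stmt11_general W hW Λ hΛs T hcomm
end

section
/- Let M₀ be a closed S*-invariant subspace of H²_p (S the forward shift) and define recursively M_k = Ker S* ⊕ S M_{k−1}. Then M_{k−1} ⊆ M_k for every k ≥ 1, the orthogonal projections satisfy I − P_k = S^k(I − P₀)S*^k, and ⋁_{k≥0} M_k = H²_p. -/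
/-! Since `S* S = 1`, if `P` is the orthogonal projection onto `M` then `1 - S (1 - P) S*` is again
an orthogonal projection, and its range is `Ker S* ⊕ S M`. Hence `1 - P_{k+1} = S (1 - P_k) S*`,
which iterates to `1 - P_k = S^k (1 - P_0) S*^k`. As `S` is an isometry this gives
`‖x - P_k x‖ ≤ ‖1 - P_0‖ ‖S*^k x‖ → 0`, so every `x` is a limit of elements of `⋃ M_k`. -/

open ContinuousLinearMap Filter

theorem IsStarProjection.mul_mul_star {R : Type*} [Ring R] [StarRing R] {p s : R}
    (hp : IsStarProjection p) (hs : star s * s = 1) : IsStarProjection (s * p * star s) where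
  isIdempotentElem := by
    calc s * p * star s * (s * p * star s) = s * (p * (star s * s) * p) * star s := by noncomm_ring
      _ = s * p * star s := by rw [hs, mul_one, hp.isIdempotentElem.eq]
  isSelfAdjoint := hp.isSelfAdjoint.conjugate s

theorem eq_pow_mul_mul_pow_of_succ_eq {M : Type*} [Monoid M] {a : ℕ → M} {s t : M}
    (h : ∀ k, a (k + 1) = s * a k * t) (k : ℕ) : a k = s ^ k * a 0 * t ^ k := by
  induction k with
  | zero => simp
  | succ k ih => rw [h, ih, pow_succ', pow_succ]; noncomm_ring

section LeftInverse

variable {R E : Type*} [Ring R] [AddCommGroup E] [Module R E] [TopologicalSpace E]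
  {S T : E →L[R] E}

theorem le_ker_sup_map_of_apply_mem (hTS : T * S = 1) {N : Submodule R E}
    (hN : ∀ x ∈ N, T x ∈ N) : N ≤ LinearMap.ker (T : E →ₗ[R] E) ⊔ N.map (S : E →ₗ[R] E) := by
  intro x hx
  have hker : x - S (T x) ∈ LinearMap.ker (T : E →ₗ[R] E) := by
    have hTSx : T (S (T x)) = T x := by rw [← mul_apply_eq_comp, hTS, one_apply_eq_self]
    simp [hTSx]
  have hmap : S (T x) ∈ N.map (S : E →ₗ[R] E) := Submodule.mem_map_of_mem (hN x hx)
  simpa using Submodule.add_mem_sup hker hmap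

theorem range_one_sub_mul_one_sub_mul [IsTopologicalAddGroup E] (hTS : T * S = 1)
    {P : E →L[R] E} (hP : IsIdempotentElem P) :
    LinearMap.range ((1 - S * (1 - P) * T : E →L[R] E) : E →ₗ[R] E) =
      LinearMap.ker (T : E →ₗ[R] E) ⊔ (LinearMap.range (P : E →ₗ[R] E)).map (S : E →ₗ[R] E) := by
  have hTSx : ∀ x, T (S x) = x := fun x => by rw [← mul_apply_eq_comp, hTS, one_apply_eq_self]
  apply le_antisymm
  · rintro _ ⟨x, rfl⟩
    have hker : x - S (T x) ∈ LinearMap.ker (T : E →ₗ[R] E) := by simp [hTSx]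
    have hmap : S (P (T x)) ∈ (LinearMap.range (P : E →ₗ[R] E)).map (S : E →ₗ[R] E) :=
      Submodule.mem_map_of_mem (LinearMap.mem_range_self _ _)
    convert Submodule.add_mem_sup hker hmap using 1
    simp only [coe_coe, sub_apply, one_apply_eq_self, mul_apply_eq_comp, map_sub]
    abel
  · refine sup_le (fun x hx => ⟨x, ?_⟩) ?_
    · have hTx : T x = 0 := hx
      simp [hTx]
    · rintro _ ⟨m, hm, rfl⟩
      refine ⟨S m, ?_⟩
      have hPm : P m = m := (LinearMap.IsIdempotentElem.mem_range_iff hP.toLinearMap).mp hm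
      simp [hTSx, hPm]

end LeftInverse

theorem Submodule.topologicalClosure_iSup_eq_top_of_tendsto {R E ι : Type*} [Semiring R]
    [AddCommMonoid E] [Module R E] [TopologicalSpace E] [ContinuousAdd E] [ContinuousConstSMul R E]
    {l : Filter ι} [l.NeBot] {M : ι → Submodule R E} {P : ι → E → E} (hPM : ∀ i x, P i x ∈ M i)
    (hP : ∀ x, Tendsto (fun i => P i x) l (nhds x)) : (⨆ i, M i).topologicalClosure = ⊤ := by
  refine eq_top_iff.mpr fun x _ => ?_
  rw [← SetLike.mem_coe, Submodule.topologicalClosure_coe]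
  exact mem_closure_of_tendsto (hP x)
    (Eventually.of_forall fun i => Submodule.mem_iSup_of_mem i (hPM i x))

theorem tendsto_apply_of_one_sub_eq_pow_mul_mul_pow {𝕜 E : Type*} [NontriviallyNormedField 𝕜]
    [NormedAddCommGroup E] [NormedSpace 𝕜 E] {S T A : E →L[𝕜] E} {P : ℕ → E →L[𝕜] E}
    (hS : ∀ x, ‖S x‖ = ‖x‖) (hP : ∀ k, 1 - P k = S ^ k * (A * T ^ k)) {x : E}
    (hx : Tendsto (fun k => ‖(T ^ k) x‖) atTop (nhds 0)) :
    Tendsto (fun k => P k x) atTop (nhds x) := by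
  have hSk : ∀ k y, ‖(S ^ k) y‖ = ‖y‖ := fun k y => by
    induction k with
    | zero => rw [pow_zero, one_apply_eq_self]
    | succ k ih => rw [pow_succ', mul_apply_eq_comp, hS, ih]
  have hdist : ∀ k, ‖P k x - x‖ ≤ ‖A‖ * ‖(T ^ k) x‖ := fun k => by
    calc ‖P k x - x‖ = ‖(1 - P k) x‖ := by rw [← norm_neg, sub_apply, one_apply_eq_self, neg_sub]
      _ = ‖A ((T ^ k) x)‖ := by rw [hP, mul_apply_eq_comp, hSk, mul_apply_eq_comp]
      _ ≤ ‖A‖ * ‖(T ^ k) x‖ := A.le_opNorm _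
  rw [tendsto_iff_norm_sub_tendsto_zero]
  exact squeeze_zero (fun k => norm_nonneg _) hdist (by simpa using hx.const_mul ‖A‖)

theorem one_sub_eq_mul_one_sub_mul_adjoint {𝕜 H : Type*} [RCLike 𝕜] [NormedAddCommGroup H]
    [InnerProductSpace 𝕜 H] [CompleteSpace H] {S P Q : H →L[𝕜] H} (hS : adjoint S * S = 1)
    (hP : IsStarProjection P) (hQ : IsStarProjection Q)
    (hQP : LinearMap.range (Q : H →ₗ[𝕜] H) = LinearMap.ker (adjoint S : H →ₗ[𝕜] H) ⊔
      (LinearMap.range (P : H →ₗ[𝕜] H)).map (S : H →ₗ[𝕜] H)) :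
    1 - Q = S * (1 - P) * adjoint S := by
  have hconj : IsStarProjection (1 - S * (1 - P) * adjoint S) := by
    rw [← star_eq_adjoint] at hS ⊢
    exact (hP.one_sub.mul_mul_star hS).one_sub
  have hrange := range_one_sub_mul_one_sub_mul hS hP.isIdempotentElem
  rw [hQ.ext hconj (hQP.trans hrange.symm), sub_sub_cancel]

theorem stmt13_general {H : Type*} [NormedAddCommGroup H] [InnerProductSpace ℂ H] [CompleteSpace H]
    (S : H →L[ℂ] H) (hS : ∀ x, ‖S x‖ = ‖x‖)
    (hpure : ∀ h : H, Tendsto (fun k : ℕ => ‖((adjoint S) ^ k) h‖) atTop (nhds 0))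
    (M : ℕ → Submodule ℂ H)
    (hM0inv : ∀ x ∈ M 0, adjoint S x ∈ M 0)
    (hrec : ∀ k : ℕ, M (k + 1) = LinearMap.ker (adjoint S : H →ₗ[ℂ] H) ⊔ Submodule.map (S : H →ₗ[ℂ] H) (M k))
    (P : ℕ → H →L[ℂ] H)
    (hP1 : ∀ k, IsIdempotentElem (P k)) (hP2 : ∀ k, IsSelfAdjoint (P k))
    (hP3 : ∀ k, LinearMap.range (P k : H →ₗ[ℂ] H) = M k) :
    (∀ k : ℕ, M k ≤ M (k + 1)) ∧
    (∀ k : ℕ, (1 : H →L[ℂ] H) - P k = (S ^ k) ∘L (((1 : H →L[ℂ] H) - P 0) ∘L ((adjoint S) ^ k))) ∧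
    (⨆ k : ℕ, M k).topologicalClosure = ⊤ := by
  have hSS : adjoint S * S = 1 := (norm_map_iff_adjoint_comp_self S).mp hS
  have hsucc : ∀ k, 1 - P (k + 1) = S * (1 - P k) * adjoint S := fun k =>
    one_sub_eq_mul_one_sub_mul_adjoint hSS ⟨hP1 k, hP2 k⟩ ⟨hP1 (k + 1), hP2 (k + 1)⟩
      (by rw [hP3, hP3, hrec])
  have hformula : ∀ k, 1 - P k = S ^ k * ((1 - P 0) * adjoint S ^ k) := fun k => by
    rw [eq_pow_mul_mul_pow_of_succ_eq (a := fun k => 1 - P k) hsucc k, mul_assoc]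
  have hmono : ∀ k, M k ≤ M (k + 1) := by
    intro k
    induction k with
    | zero => exact hrec 0 ▸ le_ker_sup_map_of_apply_mem hSS hM0inv
    | succ k ih => rw [hrec k, hrec (k + 1)]; exact sup_le_sup_left (Submodule.map_mono ih) _
  refine ⟨hmono, hformula, ?_⟩
  exact Submodule.topologicalClosure_iSup_eq_top_of_tendsto
    (fun k x => hP3 k ▸ LinearMap.mem_range_self (P k : H →ₗ[ℂ] H) x)
    (fun x => tendsto_apply_of_one_sub_eq_pow_mul_mul_pow hS hformula (hpure x))

/-- Abstract model of the Hardy space `H²_p` with its forward shift: `S` is a pure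
isometry, i.e. `S*ᵏ → 0` strongly (as holds for the forward shift on `H²_p`). -/
theorem stmt13 {H : Type*} [NormedAddCommGroup H] [InnerProductSpace ℂ H] [CompleteSpace H]
    (S : H →L[ℂ] H) (hS : ∀ x, ‖S x‖ = ‖x‖)
    (hpure : ∀ h : H, Tendsto (fun k : ℕ => ‖((adjoint S) ^ k) h‖) atTop (nhds 0))
    (M : ℕ → Submodule ℂ H) (hMc : ∀ k, IsClosed ((M k : Set H)))
    (hM0inv : ∀ x ∈ M 0, adjoint S x ∈ M 0)
    (hrec : ∀ k : ℕ, M (k + 1) = LinearMap.ker (adjoint S : H →ₗ[ℂ] H) ⊔ Submodule.map (S : H →ₗ[ℂ] H) (M k))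
    (P : ℕ → H →L[ℂ] H)
    (hP1 : ∀ k, IsIdempotentElem (P k)) (hP2 : ∀ k, IsSelfAdjoint (P k))
    (hP3 : ∀ k, LinearMap.range (P k : H →ₗ[ℂ] H) = M k) :
    (∀ k : ℕ, M k ≤ M (k + 1)) ∧
    (∀ k : ℕ, (1 : H →L[ℂ] H) - P k = (S ^ k) ∘L (((1 : H →L[ℂ] H) - P 0) ∘L ((adjoint S) ^ k))) ∧
    (⨆ k : ℕ, M k).topologicalClosure = ⊤ :=
  stmt13_general S hS hpure M hM0inv hrec P hP1 hP2 hP3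
end

section
/- Let H : H²_p → K²_q be a bounded operator and M a closed subspace of H²_p with S*M ⊆ M and Ker S* ⊆ M. With γ = ‖H∘P_M‖, D_M = (γ²I − P_M H*H P_M)^{1/2}, D°_M = (γ²I − S*P_M H*H P_M S)^{1/2}, R_M the projection onto S*M and Q_M = S R_M: if D°_M is invertible, then P := D_M Q_M D°_M^{-2} Q_M* D_M is the orthogonal projection onto the (closed) range of D_M Q_M. -/
/-!
Put `X = D_M Q_M`. Since `S` is an isometry, `S* D_M² S = D°_M²`, and `R_M` commutes with
`D°_M² = γ² - S* P_M H* H P_M S` because the subtracted operator is self-adjoint with range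
in `S* M = ran R_M`. Hence `X* X = R_M D°_M² R_M = D°_M² R_M`, so `Y = D°_M⁻² X*` is an inner
inverse of `X`: `X Y X = X`. For any inner inverse, `X Y` is an idempotent with the same range
as `X`, and this range is closed, being the kernel of `1 - X Y`. Finally `P = X Y` is
self-adjoint because `D°_M⁻²` is.
-/

open ContinuousLinearMap

namespace ContinuousLinearMap

section InnerInverse

variable {R E F : Type*} [Ring R] [TopologicalSpace E] [AddCommGroup E] [Module R E]
  [TopologicalSpace F] [AddCommGroup F] [Module R F] {X : E →L[R] F} {Y : F →L[R] E}

theorem isIdempotentElem_comp_of_comp_comp_eq_self (h : X ∘L Y ∘L X = X) :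
    IsIdempotentElem (X ∘L Y) := by
  change (X ∘L Y ∘L X) ∘L Y = X ∘L Y
  rw [h]

theorem range_comp_of_comp_comp_eq_self (h : X ∘L Y ∘L X = X) :
    LinearMap.range ((X ∘L Y : F →L[R] F) : F →ₗ[R] F) =
      LinearMap.range (X : E →ₗ[R] F) := by
  refine le_antisymm (LinearMap.range_comp_le_range _ _) ?_
  rintro _ ⟨x, rfl⟩
  exact ⟨X x, DFunLike.congr_fun h x⟩

theorem isClosed_range_of_comp_comp_eq_self [IsTopologicalAddGroup F] [T1Space F]
    (h : X ∘L Y ∘L X = X) : IsClosed (Set.range X) := by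
  have := (isIdempotentElem_comp_of_comp_comp_eq_self h).isClosed_range
  rwa [range_comp_of_comp_comp_eq_self h, LinearMap.coe_range] at this

end InnerInverse

end ContinuousLinearMap

section StarMonoid

variable {A : Type*} [Monoid A] [StarMul A]

theorem IsSelfAdjoint.of_mul_eq_one_s14 {a b : A} (ha : IsSelfAdjoint a) (h : a * b = 1) :
    IsSelfAdjoint b :=
  left_inv_eq_right_inv (by simpa only [star_mul, ha.star_eq, star_one] using congrArg star h) h

theorem IsSelfAdjoint.commute_of_mul_eq_self {p a : A} (hp : IsSelfAdjoint p)
    (ha : IsSelfAdjoint a) (h : p * a = a) : Commute p a := by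
  have h' : a * p = a := by simpa only [star_mul, hp.star_eq, ha.star_eq] using congrArg star h
  exact h.trans h'.symm

theorem star_mul_self_eq_of_commute {d s r e : A} (hd : IsSelfAdjoint d) (hr : IsSelfAdjoint r)
    (hr' : IsIdempotentElem r) (hsd : star s * (d * d) * s = e * e) (hre : Commute r (e * e)) :
    star (d * (s * r)) * (d * (s * r)) = e * e * r := by
  calc star (d * (s * r)) * (d * (s * r)) = r * (star s * (d * d) * s) * r := by
        simp only [star_mul, hr.star_eq, hd.star_eq, mul_assoc]
    _ = e * e * r := by rw [hsd, hre.eq, mul_assoc, hr'.eq]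

theorem mul_mul_star_mul_eq_self_of_commute {d s r e f : A} (hd : IsSelfAdjoint d)
    (hr : IsSelfAdjoint r) (hr' : IsIdempotentElem r) (hsd : star s * (d * d) * s = e * e)
    (hre : Commute r (e * e)) (hf : f * e = 1) :
    d * (s * r) * (f * f * star (d * (s * r))) * (d * (s * r)) = d * (s * r) := by
  calc d * (s * r) * (f * f * star (d * (s * r))) * (d * (s * r))
      = d * (s * r) * (f * (f * e) * e) * r := by
        simp only [mul_assoc, star_mul_self_eq_of_commute hd hr hr' hsd hre]
    _ = d * (s * r) := by simp only [hf, mul_one, mul_assoc, hr'.eq]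

end StarMonoid

theorem ContinuousLinearMap.commute_of_range_le_range {𝕜 E : Type*} [RCLike 𝕜]
    [NormedAddCommGroup E] [InnerProductSpace 𝕜 E] [CompleteSpace E] {p a : E →L[𝕜] E}
    (hp : IsIdempotentElem p) (hp' : IsSelfAdjoint p) (ha : IsSelfAdjoint a)
    (h : LinearMap.range (a : E →ₗ[𝕜] E) ≤ LinearMap.range (p : E →ₗ[𝕜] E)) :
    Commute p a :=
  hp'.commute_of_mul_eq_self ha
    (coe_inj.mp ((LinearMap.IsIdempotentElem.comp_eq_right_iff hp.toLinearMap _).mpr h))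

theorem stmt14_general {H K : Type*} [NormedAddCommGroup H] [InnerProductSpace ℂ H] [CompleteSpace H]
    [NormedAddCommGroup K] [InnerProductSpace ℂ K] [CompleteSpace K]
    (S : H →L[ℂ] H) (hS : ∀ x, ‖S x‖ = ‖x‖)
    (Hop : H →L[ℂ] K)
    (M : Submodule ℂ H)
    (P : H →L[ℂ] H) (hP2 : IsSelfAdjoint P)
    (hP3 : LinearMap.range (P : H →ₗ[ℂ] H) = M)
    (R : H →L[ℂ] H) (hR1 : IsIdempotentElem R) (hR2 : IsSelfAdjoint R)
    (hR3 : LinearMap.range (R : H →ₗ[ℂ] H) = Submodule.map ((adjoint S : H →L[ℂ] H) : H →ₗ[ℂ] H) M)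
    (D : H →L[ℂ] H) (hD : D.IsPositive)
    (hDsq : D ∘L D = ((‖Hop ∘L P‖ : ℂ) ^ 2) • (1 : H →L[ℂ] H)
        - P ∘L ((adjoint Hop) ∘L Hop) ∘L P)
    (D' : H →L[ℂ] H) (hD' : D'.IsPositive)
    (hD'sq : D' ∘L D' = ((‖Hop ∘L P‖ : ℂ) ^ 2) • (1 : H →L[ℂ] H)
        - (adjoint S) ∘L (P ∘L ((adjoint Hop) ∘L Hop) ∘L P) ∘L S)
    (D'i : H →L[ℂ] H) (hi1 : D'i ∘L D' = 1) (hi2 : D' ∘L D'i = 1) :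
    IsIdempotentElem (D ∘L (S ∘L R) ∘L (D'i ∘L D'i) ∘L (adjoint (S ∘L R)) ∘L D) ∧
    IsSelfAdjoint (D ∘L (S ∘L R) ∘L (D'i ∘L D'i) ∘L (adjoint (S ∘L R)) ∘L D) ∧
    IsClosed (Set.range (D ∘L (S ∘L R))) ∧
    LinearMap.range ((D ∘L (S ∘L R) ∘L (D'i ∘L D'i) ∘L (adjoint (S ∘L R)) ∘L D : H →L[ℂ] H) : H →ₗ[ℂ] H)
      = LinearMap.range ((D ∘L (S ∘L R) : H →L[ℂ] H) : H →ₗ[ℂ] H) := by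
  have hSS : star S * S = 1 := (norm_map_iff_adjoint_comp_self S).mp hS
  simp only [← mul_def, ← star_eq_adjoint] at hDsq hD'sq hi1 hi2 ⊢
  have hG : IsSelfAdjoint (P * (adjoint Hop ∘L Hop * P)) := by
    simpa only [hP2.star_eq, mul_assoc] using
      (isPositive_adjoint_comp_self Hop).isSelfAdjoint.conjugate P
  have hRG : Commute R (star S * (P * (adjoint Hop ∘L Hop * P) * S)) := by
    refine commute_of_range_le_range hR1 hR2 (by simpa only [mul_assoc] using hG.conjugate' S) ?_
    rw [hR3, ← hP3]
    rintro _ ⟨x, rfl⟩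
    exact ⟨_, ⟨_, rfl⟩, rfl⟩
  have hRD' : Commute R (D' * D') := by
    rw [hD'sq]
    exact ((Commute.one_right R).smul_right _).sub_right hRG
  have hSDS : star S * (D * D) * S = D' * D' := by
    rw [hDsq, hD'sq]
    simp only [mul_sub, sub_mul, mul_smul_comm, smul_mul_assoc, mul_one, hSS, mul_assoc]
  rw [show star (S * R) * D = star (D * (S * R)) by rw [star_mul D, hD.isSelfAdjoint.star_eq],
    ← mul_assoc D]
  have hinner := mul_mul_star_mul_eq_self_of_commute hD.isSelfAdjoint hR2 hR1 hSDS hRD' hi1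
  have hN : IsSelfAdjoint (D'i * D'i) := by
    simpa only [(hD'.isSelfAdjoint.of_mul_eq_one_s14 hi2).star_eq] using IsSelfAdjoint.star_mul_self D'i
  exact ⟨isIdempotentElem_comp_of_comp_comp_eq_self hinner, hN.conj_adjoint (D * (S * R)),
    isClosed_range_of_comp_comp_eq_self (Y := D'i * D'i * star (D * (S * R))) hinner,
    range_comp_of_comp_comp_eq_self hinner⟩

theorem stmt14 {H K : Type*} [NormedAddCommGroup H] [InnerProductSpace ℂ H] [CompleteSpace H]
    [NormedAddCommGroup K] [InnerProductSpace ℂ K] [CompleteSpace K]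
    (S : H →L[ℂ] H) (hS : ∀ x, ‖S x‖ = ‖x‖)
    (Hop : H →L[ℂ] K)
    (M : Submodule ℂ H) (hMc : IsClosed ((M : Set H)))
    (hMinv : ∀ x ∈ M, adjoint S x ∈ M)
    (hker : LinearMap.ker ((adjoint S : H →L[ℂ] H) : H →ₗ[ℂ] H) ≤ M)
    (P : H →L[ℂ] H) (hP1 : IsIdempotentElem P) (hP2 : IsSelfAdjoint P)
    (hP3 : LinearMap.range (P : H →ₗ[ℂ] H) = M)
    (R : H →L[ℂ] H) (hR1 : IsIdempotentElem R) (hR2 : IsSelfAdjoint R)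
    (hR3 : LinearMap.range (R : H →ₗ[ℂ] H) = Submodule.map ((adjoint S : H →L[ℂ] H) : H →ₗ[ℂ] H) M)
    (D : H →L[ℂ] H) (hD : D.IsPositive)
    (hDsq : D ∘L D = ((‖Hop ∘L P‖ : ℂ) ^ 2) • (1 : H →L[ℂ] H)
        - P ∘L ((adjoint Hop) ∘L Hop) ∘L P)
    (D' : H →L[ℂ] H) (hD' : D'.IsPositive)
    (hD'sq : D' ∘L D' = ((‖Hop ∘L P‖ : ℂ) ^ 2) • (1 : H →L[ℂ] H)
        - (adjoint S) ∘L (P ∘L ((adjoint Hop) ∘L Hop) ∘L P) ∘L S)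
    (D'i : H →L[ℂ] H) (hi1 : D'i ∘L D' = 1) (hi2 : D' ∘L D'i = 1) :
    IsIdempotentElem (D ∘L (S ∘L R) ∘L (D'i ∘L D'i) ∘L (adjoint (S ∘L R)) ∘L D) ∧
    IsSelfAdjoint (D ∘L (S ∘L R) ∘L (D'i ∘L D'i) ∘L (adjoint (S ∘L R)) ∘L D) ∧
    IsClosed (Set.range (D ∘L (S ∘L R))) ∧
    LinearMap.range ((D ∘L (S ∘L R) ∘L (D'i ∘L D'i) ∘L (adjoint (S ∘L R)) ∘L D : H →L[ℂ] H) : H →ₗ[ℂ] H)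
      = LinearMap.range ((D ∘L (S ∘L R) : H →L[ℂ] H) : H →ₗ[ℂ] H) :=
  stmt14_general S hS Hop M P hP2 hP3 R hR1 hR2 hR3 D hD hDsq D' hD' hD'sq D'i hi1 hi2
end

section
/- With the same notation (S an isometry, M closed with S*M ⊆ M, Ker S* ⊆ M, D°_M invertible, Λ_M = D°_M^{-2}S*D_M²), the compression (I − P_M)Λ_M(I − P_M) equals (I − P_M)S*(I − P_M) and is therefore a contraction; combined with r_spec(Λ_M P_M) ≤ 1, this yields r_spec(Λ_M) ≤ 1. -/
/-!
Since `Λ S = D°⁻² S* D² S = D°⁻² D°² = 1 = S* S` and `Λ` maps `Ker S* ⊆ M` into `M`, the operators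
`Λ` and `S*` agree modulo `M`: `(1 - P) Λ = (1 - P) S*`. Compressing by `1 - P` gives the identity,
and the compression of the contraction `S*` by an orthogonal projection is a contraction. As `M` is
`Λ`-invariant, `Λ` is upper triangular for `H = M ⊕ M⊥`, so every nonzero spectral value of `Λ` lies
in `σ(Λ P)` or in `σ((1 - P) Λ (1 - P))`.
-/

section Triangular

variable {A : Type*} [Ring A]

/-- With `a = x p`, `b = p x (1 - p)`, `c = (1 - p) x (1 - p)` one has `ba = ca = cb = b² = 0`,
hence `z²(z - x) = (z - c)(z - b)(z - a)`, and `z - b` is a unit since `b` is nilpotent. -/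
theorem isUnit_sub_of_one_sub_mul_mul_eq_zero {p x z : A} (hp : IsIdempotentElem p)
    (hx : (1 - p) * x * p = 0) (hz : ∀ y, Commute z y) (hz0 : IsUnit z)
    (ha : IsUnit (z - x * p)) (hc : IsUnit (z - (1 - p) * x * (1 - p))) :
    IsUnit (z - x) := by
  set q := 1 - p
  set a := x * p
  set b := p * x * q
  set c := q * x * q
  have hqp : q * p = 0 := hp.one_sub_mul_self
  have hba : b * a = 0 := by simp only [b, a, mul_assoc, ← mul_assoc q x p, hx, mul_zero]
  have hca : c * a = 0 := by simp only [c, a, mul_assoc, ← mul_assoc q x p, hx, mul_zero]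
  have hcb : c * b = 0 := by
    simp only [c, b, mul_assoc, ← mul_assoc q p, hqp, zero_mul, mul_zero]
  have hbb : b * b = 0 := by simp only [b, mul_assoc, ← mul_assoc q p, hqp, zero_mul, mul_zero]
  have hsum : a + b + c = x := by
    rw [add_assoc, ← add_mul, ← add_mul, add_sub_cancel, one_mul, ← mul_add, add_sub_cancel,
      mul_one]
  have hb : IsUnit (z - b) := by
    rw [sub_eq_add_neg]
    exact (IsNilpotent.neg ⟨2, by rw [pow_two, hbb]⟩).isUnit_add_left_of_commute hz0
      (hz b).neg_right.symm
  have hab : (z - b) * (z - a) = z * (z - a - b) := by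
    calc (z - b) * (z - a) = z * z - z * a - b * z + b * a := by noncomm_ring
      _ = z * (z - a - b) := by rw [hba, (hz b).eq.symm]; noncomm_ring
  have key : (z - c) * ((z - b) * (z - a)) = (z * z) * (z - x) := by
    calc (z - c) * ((z - b) * (z - a))
        = z * (z * z - z * a - z * b - c * z + c * a + c * b) := by
          rw [hab, ← mul_assoc, (hz (z - c)).eq.symm, mul_assoc]; noncomm_ring
      _ = (z * z) * (z - x) := by rw [hca, hcb, (hz c).eq.symm, ← hsum]; noncomm_ring
  have := hc.mul (hb.mul ha)
  rwa [key, (hz0.mul hz0).mul_left_iff] at this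

theorem spectrum_subset_of_one_sub_mul_mul_eq_zero {𝕜 : Type*} [Field 𝕜] [Algebra 𝕜 A] {p x : A}
    (hp : IsIdempotentElem p) (hx : (1 - p) * x * p = 0) :
    spectrum 𝕜 x ⊆ insert 0 (spectrum 𝕜 (x * p) ∪ spectrum 𝕜 ((1 - p) * x * (1 - p))) := by
  intro k hk
  by_contra h
  simp only [Set.mem_insert_iff, Set.mem_union, not_or] at h
  obtain ⟨hk0, ha, hc⟩ := h
  exact spectrum.mem_iff.mp hk <| isUnit_sub_of_one_sub_mul_mul_eq_zero hp hx
    (Algebra.commutes k) ((Ne.isUnit hk0).map _) (spectrum.notMem_iff.mp ha)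
    (spectrum.notMem_iff.mp hc)

theorem spectralRadius_le_max_of_one_sub_mul_mul_eq_zero {𝕜 : Type*} [NormedField 𝕜]
    [Algebra 𝕜 A] {p x : A} (hp : IsIdempotentElem p) (hx : (1 - p) * x * p = 0) :
    spectralRadius 𝕜 x ≤
      max (spectralRadius 𝕜 (x * p)) (spectralRadius 𝕜 ((1 - p) * x * (1 - p))) := by
  refine iSup₂_le fun k hk => ?_
  rcases spectrum_subset_of_one_sub_mul_mul_eq_zero hp hx hk with rfl | hk | hk
  · simp
  · exact le_max_of_le_left (le_iSup₂_of_le k hk le_rfl)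
  · exact le_max_of_le_right (le_iSup₂_of_le k hk le_rfl)

end Triangular

theorem IsStarProjection.norm_mul_mul_le {E : Type*} [NonUnitalNormedRing E] [StarRing E]
    [CStarRing E] {p : E} (hp : IsStarProjection p) (a : E) : ‖p * a * p‖ ≤ ‖a‖ :=
  calc ‖p * a * p‖ ≤ ‖p‖ * ‖a‖ * ‖p‖ := norm_mul₃_le
    _ ≤ 1 * ‖a‖ * 1 := by gcongr <;> exact hp.norm_le _
    _ = ‖a‖ := by rw [one_mul, mul_one]

namespace ContinuousLinearMap

theorem apply_mem_of_comp_eq_comp {R E : Type*} [Ring R] [TopologicalSpace E] [AddCommGroup E]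
    [Module R E] {L P Q : E →L[R] E} {M : Submodule R E} (hP : ∀ m ∈ M, P m = m)
    (hQ : LinearMap.range (Q : E →ₗ[R] E) ≤ M) (h : Q ∘L L = L ∘L P) {m : E} (hm : m ∈ M) :
    L m ∈ M := by
  rw [← hP m hm, ← comp_apply, ← h]
  exact hQ (LinearMap.mem_range_self _ _)

theorem comp_eq_comp_of_comp_eq_id {R E F G : Type*} [Ring R] [TopologicalSpace E]
    [AddCommGroup E] [Module R E] [TopologicalSpace F] [AddCommGroup F] [Module R F]
    [TopologicalSpace G] [AddCommGroup G] [Module R G]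
    {L T : E →L[R] F} {S : F →L[R] E} {Q : F →L[R] G}
    (hL : L ∘L S = .id R F) (hT : T ∘L S = .id R F) (hQ : ∀ y, T y = 0 → Q (L y) = 0) :
    Q ∘L L = Q ∘L T := by
  ext x
  have hST : T (x - S (T x)) = 0 := by
    rw [map_sub, ← comp_apply, hT, id_apply, sub_self]
  have := hQ _ hST
  rwa [map_sub, ← comp_apply L S, hL, id_apply, map_sub, sub_eq_zero] at this

theorem spectralRadius_le_nnnorm {𝕜 E : Type*} [NontriviallyNormedField 𝕜]
    [NormedAddCommGroup E] [NormedSpace 𝕜 E] [CompleteSpace E] (a : E →L[𝕜] E) :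
    spectralRadius 𝕜 a ≤ ‖a‖₊ := iSup₂_le fun k hk => by
  have hk' := spectrum.subset_closedBall_norm_mul a hk
  rw [Metric.mem_closedBall, dist_zero_right] at hk'
  exact_mod_cast hk'.trans (mul_le_of_le_one_right (norm_nonneg a) norm_id_le)

end ContinuousLinearMap

open ContinuousLinearMap

theorem stmt16_general {H : Type*} [NormedAddCommGroup H] [InnerProductSpace ℂ H] [CompleteSpace H]
    (S : H →L[ℂ] H) (hS : ∀ x, ‖S x‖ = ‖x‖)
    (M : Submodule ℂ H)
    (hMinv : ∀ x ∈ M, adjoint S x ∈ M)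
    (hker : LinearMap.ker (adjoint S : H →ₗ[ℂ] H) ≤ M)
    (P : H →L[ℂ] H) (hP1 : IsIdempotentElem P) (hP2 : IsSelfAdjoint P)
    (hP3 : LinearMap.range (P : H →ₗ[ℂ] H) = M)
    (R : H →L[ℂ] H)
    (hR3 : LinearMap.range (R : H →ₗ[ℂ] H) = Submodule.map (adjoint S : H →ₗ[ℂ] H) M)
    (D : H →L[ℂ] H)
    (D' : H →L[ℂ] H)
    (hD'sq : D' ∘L D' = (adjoint S) ∘L (D ∘L D) ∘L S)
    (D'i : H →L[ℂ] H) (hi1 : D'i ∘L D' = 1)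
    (hsr : spectralRadius ℂ
        (((D'i ∘L D'i) ∘L ((adjoint S) ∘L (D ∘L D))) ∘L P) ≤ 1)
    (hRΛ : R ∘L ((D'i ∘L D'i) ∘L ((adjoint S) ∘L (D ∘L D)))
      = ((D'i ∘L D'i) ∘L ((adjoint S) ∘L (D ∘L D))) ∘L P) :
    ((1 : H →L[ℂ] H) - P) ∘L ((D'i ∘L D'i) ∘L ((adjoint S) ∘L (D ∘L D)))
        ∘L ((1 : H →L[ℂ] H) - P)
      = ((1 : H →L[ℂ] H) - P) ∘L (adjoint S) ∘L ((1 : H →L[ℂ] H) - P) ∧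
    ‖((1 : H →L[ℂ] H) - P) ∘L ((D'i ∘L D'i) ∘L ((adjoint S) ∘L (D ∘L D)))
        ∘L ((1 : H →L[ℂ] H) - P)‖ ≤ 1 ∧
    spectralRadius ℂ ((D'i ∘L D'i) ∘L ((adjoint S) ∘L (D ∘L D))) ≤ 1 := by
  set L := (D'i ∘L D'i) ∘L ((adjoint S) ∘L (D ∘L D))
  have hPfix : ∀ m ∈ M, P m = m := fun m hm =>
    (LinearMap.IsIdempotentElem.mem_range_iff hP1.toLinearMap).mp (hP3 ▸ hm)
  have hPM : ∀ m ∈ M, (1 - P) m = 0 := fun m hm => by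
    rw [sub_apply, one_apply_eq_self, hPfix m hm, sub_self]
  have hLM : ∀ m ∈ M, L m ∈ M := fun m hm =>
    apply_mem_of_comp_eq_comp hPfix (hR3 ▸ Submodule.map_le_iff_le_comap.mpr hMinv) hRΛ hm
  have hTS : adjoint S ∘L S = 1 := (norm_map_iff_adjoint_comp_self S).mp hS
  have hLS : L ∘L S = 1 :=
    calc L ∘L S = (D'i ∘L D'i) ∘L (D' ∘L D') := by simp only [L, hD'sq, comp_assoc]
      _ = 1 := by rw [comp_assoc, ← comp_assoc D'i D', hi1, one_def, id_comp, hi1, one_def]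
  have hcomp : (1 - P) ∘L L ∘L (1 - P) = (1 - P) ∘L adjoint S ∘L (1 - P) := by
    rw [← comp_assoc, comp_eq_comp_of_comp_eq_id hLS hTS fun y hy => hPM _ (hLM y (hker hy)),
      comp_assoc]
  have hnorm : ‖(1 - P) ∘L adjoint S ∘L (1 - P)‖ ≤ 1 := by
    have hQ := (IsStarProjection.one_sub ⟨hP1, hP2⟩).norm_mul_mul_le (adjoint S)
    rw [mul_def, mul_def, comp_assoc] at hQ
    refine hQ.trans ?_
    rw [LinearIsometryEquiv.norm_map]
    exact opNorm_le_bound S zero_le_one fun x => by rw [hS x, one_mul]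
  refine ⟨hcomp, hcomp ▸ hnorm, ?_⟩
  have htri : (1 - P) * L * P = 0 :=
    ext fun x => hPM _ (hLM _ (hP3 ▸ LinearMap.mem_range_self _ x))
  refine (spectralRadius_le_max_of_one_sub_mul_mul_eq_zero hP1 htri).trans (max_le hsr ?_)
  calc spectralRadius ℂ ((1 - P) * L * (1 - P))
      = spectralRadius ℂ ((1 - P) ∘L adjoint S ∘L (1 - P)) := by rw [← hcomp]; rfl
    _ ≤ 1 := (spectralRadius_le_nnnorm _).trans (by exact_mod_cast hnorm)

theorem stmt16 {H : Type*} [NormedAddCommGroup H] [InnerProductSpace ℂ H] [CompleteSpace H]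
    (S : H →L[ℂ] H) (hS : ∀ x, ‖S x‖ = ‖x‖)
    (M : Submodule ℂ H) (hMc : IsClosed ((M : Set H)))
    (hMinv : ∀ x ∈ M, adjoint S x ∈ M)
    (hker : LinearMap.ker (adjoint S : H →ₗ[ℂ] H) ≤ M)
    (P : H →L[ℂ] H) (hP1 : IsIdempotentElem P) (hP2 : IsSelfAdjoint P)
    (hP3 : LinearMap.range (P : H →ₗ[ℂ] H) = M)
    (R : H →L[ℂ] H) (hR1 : IsIdempotentElem R) (hR2 : IsSelfAdjoint R)
    (hR3 : LinearMap.range (R : H →ₗ[ℂ] H) = Submodule.map (adjoint S : H →ₗ[ℂ] H) M)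
    (D : H →L[ℂ] H) (hD : D.IsPositive)
    (D' : H →L[ℂ] H) (hD' : D'.IsPositive)
    (hD'sq : D' ∘L D' = (adjoint S) ∘L (D ∘L D) ∘L S)
    (D'i : H →L[ℂ] H) (hi1 : D'i ∘L D' = 1) (hi2 : D' ∘L D'i = 1)
    (hsr : spectralRadius ℂ
        (((D'i ∘L D'i) ∘L ((adjoint S) ∘L (D ∘L D))) ∘L P) ≤ 1)
    (hRΛ : R ∘L ((D'i ∘L D'i) ∘L ((adjoint S) ∘L (D ∘L D)))
      = ((D'i ∘L D'i) ∘L ((adjoint S) ∘L (D ∘L D))) ∘L P) :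
    ((1 : H →L[ℂ] H) - P) ∘L ((D'i ∘L D'i) ∘L ((adjoint S) ∘L (D ∘L D)))
        ∘L ((1 : H →L[ℂ] H) - P)
      = ((1 : H →L[ℂ] H) - P) ∘L (adjoint S) ∘L ((1 : H →L[ℂ] H) - P) ∧
    ‖((1 : H →L[ℂ] H) - P) ∘L ((D'i ∘L D'i) ∘L ((adjoint S) ∘L (D ∘L D)))
        ∘L ((1 : H →L[ℂ] H) - P)‖ ≤ 1 ∧
    spectralRadius ℂ ((D'i ∘L D'i) ∘L ((adjoint S) ∘L (D ∘L D))) ≤ 1 :=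
  stmt16_general S hS M hMinv hker P hP1 hP2 hP3 R hR3 D D' hD'sq D'i hi1 hsr hRΛ
end
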